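/- arXiv:2310.09379 — 2 statements merged into one kernel-verified Lean document; each statement's English description precedes it below -/
import Mathlib

section
/- For the family A(n,3,1) = {F ∈ C([n],3) : |F ∩ {1,2,3}| ≥ 2} and the Hilton–Milner family H(n,3,1) = {F ∈ C([n],3) : 1 ∈ F, F ∩ {2,3,4} ≠ ∅} ∪ {{2,3,4}}, one has co₂(H(n,3,1)) = co₂(A(n,3,1)) for all n ≥ 4. -/
open Finset
variable {n : ℕ}
lemma deg_count {n : ℕ} (p : Finset (Fin n) → Prop) [DecidablePred p]
    (E : Finset (Fin n)) (hE : E.card = 2) :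
    (((Finset.univ.powersetCard 3).filter p).filter (fun F => E ⊆ F)).card
      = (Eᶜ.filter (fun z => p (insert z E))).card := by
  rw [Finset.filter_filter]
  refine (Finset.card_bij (fun z _ => insert z E) ?_ ?_ ?_).symm
  · intro z hz
    simp only [mem_filter, Finset.mem_compl] at hz
    simp only [mem_filter, Finset.mem_powersetCard]
    exact ⟨⟨Finset.subset_univ _, by rw [Finset.card_insert_of_notMem hz.1, hE]⟩, hz.2,
      Finset.subset_insert _ _⟩
  · intro z hz z' hz' h
    simp only [mem_filter, Finset.mem_compl] at hz hz'
    have := Finset.mem_insert_self z E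
    rw [h] at this
    rcases Finset.mem_insert.mp this with h' | h'
    · exact h'
    · exact absurd h' hz.1
  · intro F hF
    simp only [mem_filter, Finset.mem_powersetCard] at hF
    obtain ⟨⟨-, hcard⟩, hp, hsub⟩ := hF
    have h1 : (F \ E).card = 1 := by
      rw [Finset.card_sdiff_of_subset hsub, hE, hcard]
    obtain ⟨z, hz⟩ := Finset.card_eq_one.mp h1
    have hzmem : z ∈ F \ E := hz ▸ Finset.mem_singleton_self z
    have hzE : z ∉ E := (Finset.mem_sdiff.mp hzmem).2
    have hFeq : insert z E = F := by
      rw [Finset.insert_eq, ← hz, Finset.sdiff_union_of_subset hsub]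
    refine ⟨z, ?_, hFeq⟩
    simp only [mem_filter, Finset.mem_compl]
    exact ⟨hzE, by rw [hFeq]; exact hp⟩

lemma exists_ne_of_card_two {E : Finset (Fin n)} (hE : E.card = 2) (x : Fin n) :
    ∃ y ∈ E, y ≠ x := by
  obtain ⟨u, v, huv, rfl⟩ := Finset.card_eq_two.mp hE
  by_cases h : u = x
  · exact ⟨v, by simp, by rw [← h]; exact huv.symm⟩
  · exact ⟨u, by simp, h⟩

lemma pair_eq {E : Finset (Fin n)} (hE : E.card = 2) {x y : Fin n}
    (hx : x ∈ E) (hy : y ∈ E) (hxy : x ≠ y) : E = {x, y} := by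
  refine (Finset.eq_of_subset_of_card_le ?_ ?_).symm
  · intro z hz
    rcases Finset.mem_insert.mp hz with rfl | hz
    · exact hx
    · exact (Finset.mem_singleton.mp hz) ▸ hy
  · rw [hE, Finset.card_pair hxy]

lemma card_compl' (E : Finset (Fin n)) : Eᶜ.card = n - E.card := by
  rw [Finset.card_compl, Fintype.card_fin]

lemma card3 {x y z : Fin n} (hxy : x ≠ y) (hxz : x ≠ z) (hyz : y ≠ z) :
    ({x, y, z} : Finset (Fin n)).card = 3 := by
  rw [Finset.card_insert_of_notMem (by simp [hxy, hxz]),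
    Finset.card_insert_of_notMem (by simp [hyz]), Finset.card_singleton]

lemma Hcard (a b c d : Fin n) (hab : a ≠ b) (hac : a ≠ c) (had : a ≠ d)
    (E : Finset (Fin n)) :
    (((((Finset.univ.powersetCard 3).filter fun F : Finset (Fin n) =>
            a ∈ F ∧ (F ∩ ({b, c, d} : Finset (Fin n))).Nonempty) ∪
          {({b, c, d} : Finset (Fin n))}).filter fun F => E ⊆ F).card)
    = ((((Finset.univ.powersetCard 3).filter fun F : Finset (Fin n) =>
            a ∈ F ∧ (F ∩ ({b, c, d} : Finset (Fin n))).Nonempty).filter fun F => E ⊆ F).card)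
      + (if E ⊆ ({b, c, d} : Finset (Fin n)) then 1 else 0) := by
  have hanot : a ∉ ({b, c, d} : Finset (Fin n)) := by simp [hab, hac, had]
  rw [Finset.filter_union, Finset.card_union_of_disjoint, Finset.filter_singleton]
  · split <;> simp
  · apply Finset.disjoint_filter_filter
    simp only [Finset.disjoint_singleton_right, mem_filter]
    rintro ⟨-, ha, -⟩
    exact hanot ha

section Values
variable (a b c d : Fin n)

lemma valHA (hab : a ≠ b) (hac : a ≠ c) (had : a ≠ d) {E : Finset (Fin n)} (hE : E.card = 2) (haE : a ∈ E)
    (hsub : E ⊆ ({a, b, c, d} : Finset (Fin n))) :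
    (((((Finset.univ.powersetCard 3).filter fun F : Finset (Fin n) =>
            a ∈ F ∧ (F ∩ ({b, c, d} : Finset (Fin n))).Nonempty) ∪
          {({b, c, d} : Finset (Fin n))}).filter fun F => E ⊆ F).card) = n - 2 := by
  have hanot : a ∉ ({b, c, d} : Finset (Fin n)) := by simp [hab, hac, had]
  rw [Hcard a b c d hab hac had, deg_count _ E hE,
    if_neg (fun h => hanot (h haE)), add_zero]
  rw [Finset.filter_true_of_mem, card_compl', hE]
  intro z hz
  obtain ⟨y, hyE, hya⟩ := exists_ne_of_card_two hE a
  have hy4 : y ∈ ({a, b, c, d} : Finset (Fin n)) := hsub hyE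
  have hy3 : y ∈ ({b, c, d} : Finset (Fin n)) := by
    rcases Finset.mem_insert.mp hy4 with h | h
    · exact absurd h hya
    · exact h
  exact ⟨Finset.mem_insert_of_mem haE,
    ⟨y, Finset.mem_inter.mpr ⟨Finset.mem_insert_of_mem hyE, hy3⟩⟩⟩

lemma valHB (hab : a ≠ b) (hac : a ≠ c) (had : a ≠ d) (hbc : b ≠ c) (hbd : b ≠ d) (hcd : c ≠ d) {E : Finset (Fin n)} (hE : E.card = 2) (haE : a ∈ E)
    (hnsub : ¬ E ⊆ ({a, b, c, d} : Finset (Fin n))) :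
    (((((Finset.univ.powersetCard 3).filter fun F : Finset (Fin n) =>
            a ∈ F ∧ (F ∩ ({b, c, d} : Finset (Fin n))).Nonempty) ∪
          {({b, c, d} : Finset (Fin n))}).filter fun F => E ⊆ F).card) = 3 := by
  have hanot : a ∉ ({b, c, d} : Finset (Fin n)) := by simp [hab, hac, had]
  obtain ⟨y, hyE, hy4⟩ := Finset.not_subset.mp hnsub
  have hya : y ≠ a := fun h => hy4 (by rw [h]; exact Finset.mem_insert_self a _)
  have hy3 : y ∉ ({b, c, d} : Finset (Fin n)) := fun h => hy4 (Finset.mem_insert_of_mem h)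
  have hEeq : E = {a, y} := pair_eq hE haE hyE hya.symm
  rw [Hcard a b c d hab hac had, deg_count _ E hE,
    if_neg (fun h => hanot (h haE)), add_zero]
  have : Eᶜ.filter (fun z => a ∈ insert z E ∧
      ((insert z E ∩ ({b, c, d} : Finset (Fin n))).Nonempty)) = {b, c, d} := by
    ext z
    simp only [mem_filter, Finset.mem_compl]
    constructor
    · rintro ⟨hzE, -, w, hw⟩
      rw [Finset.mem_inter, hEeq] at hw
      obtain ⟨hw1, hw2⟩ := hw
      rcases Finset.mem_insert.mp hw1 with rfl | hw1
      · exact hw2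
      · rcases Finset.mem_insert.mp hw1 with rfl | hw1
        · exact absurd hw2 hanot
        · rw [Finset.mem_singleton.mp hw1] at hw2; exact absurd hw2 hy3
    · intro hz
      have hzE : z ∉ E := by
        rw [hEeq]
        simp only [Finset.mem_insert, Finset.mem_singleton]
        rintro (rfl | rfl)
        · exact hanot hz
        · exact hy3 hz
      exact ⟨hzE, Finset.mem_insert_of_mem haE,
        ⟨z, Finset.mem_inter.mpr ⟨Finset.mem_insert_self _ _, hz⟩⟩⟩
  rw [this, card3 hbc hbd hcd]

lemma valHC (hab : a ≠ b) (hac : a ≠ c) (had : a ≠ d) {E : Finset (Fin n)} (hE : E.card = 2)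
    (hsub : E ⊆ ({b, c, d} : Finset (Fin n))) :
    (((((Finset.univ.powersetCard 3).filter fun F : Finset (Fin n) =>
            a ∈ F ∧ (F ∩ ({b, c, d} : Finset (Fin n))).Nonempty) ∪
          {({b, c, d} : Finset (Fin n))}).filter fun F => E ⊆ F).card) = 2 := by
  have hanot : a ∉ ({b, c, d} : Finset (Fin n)) := by simp [hab, hac, had]
  have haE : a ∉ E := fun h => hanot (hsub h)
  obtain ⟨w, hwE⟩ := Finset.card_pos.mp (by rw [hE]; norm_num)
  rw [Hcard a b c d hab hac had, deg_count _ E hE, if_pos hsub]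
  have : Eᶜ.filter (fun z => a ∈ insert z E ∧
      ((insert z E ∩ ({b, c, d} : Finset (Fin n))).Nonempty)) = {a} := by
    ext z
    simp only [mem_filter, Finset.mem_compl, Finset.mem_singleton]
    constructor
    · rintro ⟨hzE, haz, -⟩
      rcases Finset.mem_insert.mp haz with h | h
      · exact h.symm
      · exact absurd h haE
    · rintro rfl
      exact ⟨haE, Finset.mem_insert_self _ _,
        ⟨w, Finset.mem_inter.mpr ⟨Finset.mem_insert_of_mem hwE, hsub hwE⟩⟩⟩
  rw [this, Finset.card_singleton]

lemma valHD (hab : a ≠ b) (hac : a ≠ c) (had : a ≠ d) {E : Finset (Fin n)} (hE : E.card = 2) (haE : a ∉ E)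
    (hnsub : ¬ E ⊆ ({b, c, d} : Finset (Fin n)))
    (hne : (E ∩ ({b, c, d} : Finset (Fin n))).Nonempty) :
    (((((Finset.univ.powersetCard 3).filter fun F : Finset (Fin n) =>
            a ∈ F ∧ (F ∩ ({b, c, d} : Finset (Fin n))).Nonempty) ∪
          {({b, c, d} : Finset (Fin n))}).filter fun F => E ⊆ F).card) = 1 := by
  obtain ⟨w, hw⟩ := hne
  rw [Finset.mem_inter] at hw
  rw [Hcard a b c d hab hac had, deg_count _ E hE, if_neg hnsub, add_zero]
  have : Eᶜ.filter (fun z => a ∈ insert z E ∧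
      ((insert z E ∩ ({b, c, d} : Finset (Fin n))).Nonempty)) = {a} := by
    ext z
    simp only [mem_filter, Finset.mem_compl, Finset.mem_singleton]
    constructor
    · rintro ⟨hzE, haz, -⟩
      rcases Finset.mem_insert.mp haz with h | h
      · exact h.symm
      · exact absurd h haE
    · rintro rfl
      exact ⟨haE, Finset.mem_insert_self _ _,
        ⟨w, Finset.mem_inter.mpr ⟨Finset.mem_insert_of_mem hw.1, hw.2⟩⟩⟩
  rw [this, Finset.card_singleton]

lemma valHE (hab : a ≠ b) (hac : a ≠ c) (had : a ≠ d) {E : Finset (Fin n)} (hE : E.card = 2) (haE : a ∉ E)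
    (hemp : E ∩ ({b, c, d} : Finset (Fin n)) = ∅) :
    (((((Finset.univ.powersetCard 3).filter fun F : Finset (Fin n) =>
            a ∈ F ∧ (F ∩ ({b, c, d} : Finset (Fin n))).Nonempty) ∪
          {({b, c, d} : Finset (Fin n))}).filter fun F => E ⊆ F).card) = 0 := by
  have hEne : E.Nonempty := Finset.card_pos.mp (by rw [hE]; norm_num)
  have hnsub : ¬ E ⊆ ({b, c, d} : Finset (Fin n)) := by
    intro h
    obtain ⟨w, hw⟩ := hEne
    exact Finset.notMem_empty w (hemp ▸ Finset.mem_inter.mpr ⟨hw, h hw⟩)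
  rw [Hcard a b c d hab hac had, deg_count _ E hE, if_neg hnsub, add_zero]
  rw [Finset.card_eq_zero]
  apply Finset.filter_eq_empty_iff.mpr
  intro z hz
  rw [Finset.mem_compl] at hz
  rintro ⟨haz, w, hw⟩
  rw [Finset.mem_inter] at hw
  have hza : z = a := by
    rcases Finset.mem_insert.mp haz with h | h
    · exact h.symm
    · exact absurd h haE
  rcases Finset.mem_insert.mp hw.1 with rfl | hwE
  · rw [hza] at hw
    simp [hab, hac, had] at hw
  · exact Finset.notMem_empty w (hemp ▸ Finset.mem_inter.mpr ⟨hwE, hw.2⟩)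

end Values


section AV
variable (a b c : Fin n)

lemma valAA {E : Finset (Fin n)} (hE : E.card = 2)
    (hsub : E ⊆ ({a, b, c} : Finset (Fin n))) :
    ((((Finset.univ.powersetCard 3).filter fun F : Finset (Fin n) =>
        2 ≤ (F ∩ ({a, b, c} : Finset (Fin n))).card).filter fun F => E ⊆ F).card) = n - 2 := by
  rw [deg_count _ E hE, Finset.filter_true_of_mem, card_compl', hE]
  intro z hz
  calc 2 = E.card := hE.symm
    _ ≤ _ := Finset.card_le_card (Finset.subset_inter (Finset.subset_insert _ _) hsub)

lemma valAB {E : Finset (Fin n)} (hab : a ≠ b) (hac : a ≠ c) (hbc : b ≠ c)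
    (hE : E.card = 2)
    (hnsub : ¬ E ⊆ ({a, b, c} : Finset (Fin n)))
    (hne : (E ∩ ({a, b, c} : Finset (Fin n))).Nonempty) :
    ((((Finset.univ.powersetCard 3).filter fun F : Finset (Fin n) =>
        2 ≤ (F ∩ ({a, b, c} : Finset (Fin n))).card).filter fun F => E ⊆ F).card) = 2 := by
  obtain ⟨x, hx⟩ := hne
  rw [Finset.mem_inter] at hx
  obtain ⟨y, hyE, hy3⟩ := Finset.not_subset.mp hnsub
  have hxy : x ≠ y := fun h => hy3 (h ▸ hx.2)
  have hEeq : E = {x, y} := pair_eq hE hx.1 hyE hxy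
  rw [deg_count _ E hE]
  have hkey : Eᶜ.filter (fun z => 2 ≤ ((insert z E ∩ ({a, b, c} : Finset (Fin n))).card))
      = ({a, b, c} : Finset (Fin n)).erase x := by
    ext z
    simp only [mem_filter, Finset.mem_compl, Finset.mem_erase]
    constructor
    · rintro ⟨hzE, h2⟩
      have hzx : z ≠ x := fun h => hzE (h ▸ hx.1)
      refine ⟨hzx, ?_⟩
      by_contra h
      have hsub1 : insert z E ∩ ({a, b, c} : Finset (Fin n)) ⊆ {x} := by
        intro w hw
        rw [Finset.mem_inter] at hw
        rcases Finset.mem_insert.mp hw.1 with rfl | hwE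
        · exact absurd hw.2 h
        · rw [hEeq] at hwE
          rcases Finset.mem_insert.mp hwE with rfl | hwE
          · exact Finset.mem_singleton_self _
          · rw [Finset.mem_singleton.mp hwE] at hw
            exact absurd hw.2 hy3
      have := Finset.card_le_card hsub1
      simp only [Finset.card_singleton] at this
      omega
    · rintro ⟨hzx, hz3⟩
      have hzy : z ≠ y := fun h => hy3 (h ▸ hz3)
      have hzE : z ∉ E := by
        rw [hEeq]
        simp only [Finset.mem_insert, Finset.mem_singleton]
        rintro (rfl | rfl)
        · exact hzx rfl
        · exact hzy rfl
      refine ⟨hzE, ?_⟩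
      have : ({z, x} : Finset (Fin n)) ⊆ insert z E ∩ ({a, b, c} : Finset (Fin n)) := by
        intro w hw
        rcases Finset.mem_insert.mp hw with rfl | hw
        · exact Finset.mem_inter.mpr ⟨Finset.mem_insert_self _ _, hz3⟩
        · rw [Finset.mem_singleton.mp hw]
          exact Finset.mem_inter.mpr ⟨Finset.mem_insert_of_mem hx.1, hx.2⟩
      calc 2 = ({z, x} : Finset (Fin n)).card := (Finset.card_pair hzx).symm
        _ ≤ _ := Finset.card_le_card this
  rw [hkey, Finset.card_erase_of_mem hx.2]
  have : ({a, b, c} : Finset (Fin n)).card = 3 := by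
    rw [Finset.card_insert_of_notMem (by simp [hab, hac]),
      Finset.card_insert_of_notMem (by simp [hbc]), Finset.card_singleton]
  rw [this]

lemma valAC {E : Finset (Fin n)} (hE : E.card = 2)
    (hemp : E ∩ ({a, b, c} : Finset (Fin n)) = ∅) :
    ((((Finset.univ.powersetCard 3).filter fun F : Finset (Fin n) =>
        2 ≤ (F ∩ ({a, b, c} : Finset (Fin n))).card).filter fun F => E ⊆ F).card) = 0 := by
  rw [deg_count _ E hE, Finset.card_eq_zero]
  apply Finset.filter_eq_empty_iff.mpr
  intro z hz
  rw [Finset.mem_compl] at hz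
  intro h2
  have : insert z E ∩ ({a, b, c} : Finset (Fin n)) ⊆ {z} := by
    intro w hw
    rw [Finset.mem_inter] at hw
    rcases Finset.mem_insert.mp hw.1 with rfl | hwE
    · exact Finset.mem_singleton_self _
    · exact absurd (Finset.mem_inter.mpr ⟨hwE, hw.2⟩) (by rw [hemp]; exact Finset.notMem_empty w)
  have := Finset.card_le_card this
  simp only [Finset.card_singleton] at this
  omega

end AV


section Classes
variable (a b c d : Fin n)

lemma classS1 (hab : a ≠ b) (hac : a ≠ c) (had : a ≠ d) :
    (Finset.univ.powersetCard 2 : Finset (Finset (Fin n))).filter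
        (fun E => a ∈ E ∧ E ⊆ ({a, b, c, d} : Finset (Fin n)))
      = Finset.image (fun x => ({a, x} : Finset (Fin n))) ({b, c, d} : Finset (Fin n)) := by
  have hanot : a ∉ ({b, c, d} : Finset (Fin n)) := by simp [hab, hac, had]
  ext E
  simp only [mem_filter, Finset.mem_powersetCard_univ, Finset.mem_image]
  constructor
  · rintro ⟨h2, haE, hsub⟩
    obtain ⟨y, hyE, hya⟩ := exists_ne_of_card_two h2 a
    refine ⟨y, ?_, (pair_eq h2 haE hyE hya.symm).symm⟩
    rcases Finset.mem_insert.mp (hsub hyE) with h | h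
    · exact absurd h hya
    · exact h
  · rintro ⟨x, hx, rfl⟩
    have hxa : x ≠ a := fun h => hanot (h ▸ hx)
    refine ⟨Finset.card_pair hxa.symm, Finset.mem_insert_self _ _, ?_⟩
    intro w hw
    rcases Finset.mem_insert.mp hw with rfl | hw
    · exact Finset.mem_insert_self _ _
    · exact Finset.mem_insert_of_mem (Finset.mem_singleton.mp hw ▸ hx)

lemma classS2 :
    (Finset.univ.powersetCard 2 : Finset (Finset (Fin n))).filter
        (fun E => a ∈ E ∧ ¬ E ⊆ ({a, b, c, d} : Finset (Fin n)))
      = Finset.image (fun x => ({a, x} : Finset (Fin n))) (({a, b, c, d} : Finset (Fin n))ᶜ) := by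
  ext E
  simp only [mem_filter, Finset.mem_powersetCard_univ, Finset.mem_image, Finset.mem_compl]
  constructor
  · rintro ⟨h2, haE, hnsub⟩
    obtain ⟨y, hyE, hy4⟩ := Finset.not_subset.mp hnsub
    have hya : y ≠ a := fun h => hy4 (by rw [h]; exact Finset.mem_insert_self _ _)
    exact ⟨y, hy4, (pair_eq h2 haE hyE hya.symm).symm⟩
  · rintro ⟨x, hx, rfl⟩
    have hxa : x ≠ a := fun h => hx (by rw [h]; exact Finset.mem_insert_self _ _)
    refine ⟨Finset.card_pair hxa.symm, Finset.mem_insert_self _ _, fun hsub => ?_⟩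
    exact hx (hsub (Finset.mem_insert_of_mem (Finset.mem_singleton_self _)))

lemma classS3 (hab : a ≠ b) (hac : a ≠ c) (had : a ≠ d) :
    (Finset.univ.powersetCard 2 : Finset (Finset (Fin n))).filter
        (fun E => a ∉ E ∧ E ⊆ ({b, c, d} : Finset (Fin n)))
      = ({b, c, d} : Finset (Fin n)).powersetCard 2 := by
  have hanot : a ∉ ({b, c, d} : Finset (Fin n)) := by simp [hab, hac, had]
  ext E
  simp only [mem_filter, Finset.mem_powersetCard]
  constructor
  · rintro ⟨⟨-, h2⟩, -, hsub⟩
    exact ⟨hsub, h2⟩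
  · rintro ⟨hsub, h2⟩
    exact ⟨⟨Finset.subset_univ _, h2⟩, fun h => hanot (hsub h), hsub⟩

lemma classS4 (hab : a ≠ b) (hac : a ≠ c) (had : a ≠ d) :
    (Finset.univ.powersetCard 2 : Finset (Finset (Fin n))).filter
        (fun E => a ∉ E ∧ ¬ E ⊆ ({b, c, d} : Finset (Fin n)) ∧
          (E ∩ ({b, c, d} : Finset (Fin n))).Nonempty)
      = Finset.image (fun p : Fin n × Fin n => ({p.1, p.2} : Finset (Fin n)))
          (({b, c, d} : Finset (Fin n)) ×ˢ (({a, b, c, d} : Finset (Fin n))ᶜ)) := by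
  have hanot : a ∉ ({b, c, d} : Finset (Fin n)) := by simp [hab, hac, had]
  ext E
  simp only [mem_filter, Finset.mem_powersetCard_univ, Finset.mem_image, Finset.mem_product,
    Finset.mem_compl, Prod.exists]
  constructor
  · rintro ⟨h2, haE, hnsub, x, hx⟩
    rw [Finset.mem_inter] at hx
    obtain ⟨y, hyE, hy3⟩ := Finset.not_subset.mp hnsub
    have hxy : x ≠ y := fun h => hy3 (h ▸ hx.2)
    have hy4 : y ∉ ({a, b, c, d} : Finset (Fin n)) := by
      intro h
      rcases Finset.mem_insert.mp h with rfl | h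
      · exact haE hyE
      · exact hy3 h
    exact ⟨x, y, ⟨hx.2, hy4⟩, (pair_eq h2 hx.1 hyE hxy).symm⟩
  · rintro ⟨x, y, ⟨hx3, hy4⟩, rfl⟩
    have hy3 : y ∉ ({b, c, d} : Finset (Fin n)) := fun h => hy4 (Finset.mem_insert_of_mem h)
    have hxy : x ≠ y := fun h => hy3 (h ▸ hx3)
    have hya : y ≠ a := fun h => hy4 (by rw [h]; exact Finset.mem_insert_self _ _)
    have hxa : x ≠ a := fun h => hanot (h ▸ hx3)
    refine ⟨Finset.card_pair hxy, ?_, fun hsub => ?_, ⟨x, Finset.mem_inter.mpr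
      ⟨Finset.mem_insert_self _ _, hx3⟩⟩⟩
    · simp only [Finset.mem_insert, Finset.mem_singleton]
      rintro (h | h)
      · exact hxa h.symm
      · exact hya h.symm
    · exact hy3 (hsub (Finset.mem_insert_of_mem (Finset.mem_singleton_self _)))

lemma classR1 :
    (Finset.univ.powersetCard 2 : Finset (Finset (Fin n))).filter
        (fun E => E ⊆ ({a, b, c} : Finset (Fin n)))
      = ({a, b, c} : Finset (Fin n)).powersetCard 2 := by
  ext E
  simp only [mem_filter, Finset.mem_powersetCard]
  constructor
  · rintro ⟨⟨-, h2⟩, hsub⟩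
    exact ⟨hsub, h2⟩
  · rintro ⟨hsub, h2⟩
    exact ⟨⟨Finset.subset_univ _, h2⟩, hsub⟩

lemma classR2 :
    (Finset.univ.powersetCard 2 : Finset (Finset (Fin n))).filter
        (fun E => ¬ E ⊆ ({a, b, c} : Finset (Fin n)) ∧
          (E ∩ ({a, b, c} : Finset (Fin n))).Nonempty)
      = Finset.image (fun p : Fin n × Fin n => ({p.1, p.2} : Finset (Fin n)))
          (({a, b, c} : Finset (Fin n)) ×ˢ (({a, b, c} : Finset (Fin n))ᶜ)) := by
  ext E
  simp only [mem_filter, Finset.mem_powersetCard_univ, Finset.mem_image, Finset.mem_product,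
    Finset.mem_compl, Prod.exists]
  constructor
  · rintro ⟨h2, hnsub, x, hx⟩
    rw [Finset.mem_inter] at hx
    obtain ⟨y, hyE, hy3⟩ := Finset.not_subset.mp hnsub
    have hxy : x ≠ y := fun h => hy3 (h ▸ hx.2)
    exact ⟨x, y, ⟨hx.2, hy3⟩, (pair_eq h2 hx.1 hyE hxy).symm⟩
  · rintro ⟨x, y, ⟨hx3, hy3⟩, rfl⟩
    have hxy : x ≠ y := fun h => hy3 (h ▸ hx3)
    refine ⟨Finset.card_pair hxy, fun hsub => ?_, ⟨x, Finset.mem_inter.mpr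
      ⟨Finset.mem_insert_self _ _, hx3⟩⟩⟩
    exact hy3 (hsub (Finset.mem_insert_of_mem (Finset.mem_singleton_self _)))

-- injectivity / cards
lemma card_image_pair_fixed {s : Finset (Fin n)} (ha : a ∉ s) :
    (Finset.image (fun x => ({a, x} : Finset (Fin n))) s).card = s.card := by
  apply Finset.card_image_of_injOn
  intro x hx y hy h
  simp only [Finset.mem_coe] at hx hy
  simp only at h
  have : x ∈ ({a, y} : Finset (Fin n)) := h ▸ Finset.mem_insert_of_mem (Finset.mem_singleton_self _)
  rcases Finset.mem_insert.mp this with rfl | h'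
  · exact absurd hx ha
  · exact Finset.mem_singleton.mp h'

lemma card_image_pair_prod {s t : Finset (Fin n)} (hst : ∀ x ∈ s, x ∉ t) :
    (Finset.image (fun p : Fin n × Fin n => ({p.1, p.2} : Finset (Fin n))) (s ×ˢ t)).card
      = s.card * t.card := by
  rw [Finset.card_image_of_injOn, Finset.card_product]
  rintro ⟨x, y⟩ hxy ⟨x', y'⟩ hxy' h
  simp only [Finset.mem_coe, Finset.coe_product, Set.mem_prod, Finset.mem_coe] at hxy hxy'
  obtain ⟨hx, hy⟩ := hxy
  obtain ⟨hx', hy'⟩ := hxy'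
  simp only at h
  have h1 : x = x' := by
    have : x ∈ ({x', y'} : Finset (Fin n)) := h ▸ Finset.mem_insert_self _ _
    rcases Finset.mem_insert.mp this with h' | h'
    · exact h'
    · exact absurd ((Finset.mem_singleton.mp h').symm ▸ hy') (hst x hx)
  have h2 : y = y' := by
    have : y ∈ ({x', y'} : Finset (Fin n)) :=
      h ▸ Finset.mem_insert_of_mem (Finset.mem_singleton_self _)
    rcases Finset.mem_insert.mp this with h' | h'
    · exact absurd hy (h' ▸ hst x' hx')
    · exact Finset.mem_singleton.mp h'
  exact Prod.ext h1 h2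

end Classes

/-- For `n ≥ 4`, the families `A(n,3,1)` (all triples meeting a fixed 3-set `{a,b,c}` in at
least 2 elements) and the Hilton–Milner family `H(n,3,1)` (all triples containing `a` and
meeting `{b,c,d}`, together with `{b,c,d}`) have equal codegree squared sums. -/
theorem co2_HM_eq_co2_A (n : ℕ) (hn : 4 ≤ n) (a b c d : Fin n)
    (hab : a ≠ b) (hac : a ≠ c) (had : a ≠ d) (hbc : b ≠ c) (hbd : b ≠ d) (hcd : c ≠ d) :
    ∑ E ∈ Finset.univ.powersetCard 2,
        (((((Finset.univ.powersetCard 3).filter fun F : Finset (Fin n) =>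
            a ∈ F ∧ (F ∩ ({b, c, d} : Finset (Fin n))).Nonempty) ∪
          {({b, c, d} : Finset (Fin n))}).filter fun F => E ⊆ F).card) ^ 2 =
      ∑ E ∈ Finset.univ.powersetCard 2,
        ((((Finset.univ.powersetCard 3).filter fun F : Finset (Fin n) =>
            2 ≤ (F ∩ ({a, b, c} : Finset (Fin n))).card).filter fun F => E ⊆ F).card) ^ 2 := by
  classical
  have hanot : a ∉ ({b, c, d} : Finset (Fin n)) := by simp [hab, hac, had]
  have hcard3 : ({b, c, d} : Finset (Fin n)).card = 3 := card3 hbc hbd hcd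
  have hcard4 : ({a, b, c, d} : Finset (Fin n)).card = 4 := by
    rw [show ({a, b, c, d} : Finset (Fin n)) = insert a {b, c, d} from rfl,
      Finset.card_insert_of_notMem hanot, hcard3]
  have hcardabc : ({a, b, c} : Finset (Fin n)).card = 3 := card3 hab hac hbc
  set T := (Finset.univ.powersetCard 2 : Finset (Finset (Fin n))) with hT
  -- LHS
  have hL : ∑ E ∈ T,
        (((((Finset.univ.powersetCard 3).filter fun F : Finset (Fin n) =>
            a ∈ F ∧ (F ∩ ({b, c, d} : Finset (Fin n))).Nonempty) ∪
          {({b, c, d} : Finset (Fin n))}).filter fun F => E ⊆ F).card) ^ 2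
      = (3 * (n - 2) ^ 2 + (n - 4) * 9) + (3 * 4 + ((3 * (n - 4)) * 1 + 0)) := by
    rw [← Finset.sum_filter_add_sum_filter_not T (fun E => a ∈ E)]
    rw [← Finset.sum_filter_add_sum_filter_not (T.filter (fun E => a ∈ E))
      (fun E => E ⊆ ({a, b, c, d} : Finset (Fin n)))]
    rw [← Finset.sum_filter_add_sum_filter_not (T.filter (fun E => ¬ a ∈ E))
      (fun E => E ⊆ ({b, c, d} : Finset (Fin n)))]
    rw [← Finset.sum_filter_add_sum_filter_not ((T.filter (fun E => ¬ a ∈ E)).filter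
      (fun E => ¬ E ⊆ ({b, c, d} : Finset (Fin n))))
      (fun E => (E ∩ ({b, c, d} : Finset (Fin n))).Nonempty)]
    have h1 : ∑ E ∈ (T.filter (fun E => a ∈ E)).filter
        (fun E => E ⊆ ({a, b, c, d} : Finset (Fin n))),
        (((((Finset.univ.powersetCard 3).filter fun F : Finset (Fin n) =>
            a ∈ F ∧ (F ∩ ({b, c, d} : Finset (Fin n))).Nonempty) ∪
          {({b, c, d} : Finset (Fin n))}).filter fun F => E ⊆ F).card) ^ 2
        = 3 * (n - 2) ^ 2 := by
      have hconst : ∀ E ∈ (T.filter (fun E => a ∈ E)).filter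
          (fun E => E ⊆ ({a, b, c, d} : Finset (Fin n))),
          (((((Finset.univ.powersetCard 3).filter fun F : Finset (Fin n) =>
              a ∈ F ∧ (F ∩ ({b, c, d} : Finset (Fin n))).Nonempty) ∪
            {({b, c, d} : Finset (Fin n))}).filter fun F => E ⊆ F).card) ^ 2
          = (n - 2) ^ 2 := by
        intro E hE
        simp only [hT, Finset.mem_filter, Finset.mem_powersetCard_univ] at hE
        rw [valHA a b c d hab hac had hE.1.1 hE.1.2 hE.2]
      rw [Finset.sum_congr rfl hconst, Finset.sum_const, smul_eq_mul]
      congr 1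
      rw [Finset.filter_filter, classS1 a b c d hab hac had,
        card_image_pair_fixed a hanot, hcard3]
    have h2 : ∑ E ∈ (T.filter (fun E => a ∈ E)).filter
        (fun E => ¬ E ⊆ ({a, b, c, d} : Finset (Fin n))),
        (((((Finset.univ.powersetCard 3).filter fun F : Finset (Fin n) =>
            a ∈ F ∧ (F ∩ ({b, c, d} : Finset (Fin n))).Nonempty) ∪
          {({b, c, d} : Finset (Fin n))}).filter fun F => E ⊆ F).card) ^ 2
        = (n - 4) * 9 := by
      have hconst : ∀ E ∈ (T.filter (fun E => a ∈ E)).filter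
          (fun E => ¬ E ⊆ ({a, b, c, d} : Finset (Fin n))),
          (((((Finset.univ.powersetCard 3).filter fun F : Finset (Fin n) =>
              a ∈ F ∧ (F ∩ ({b, c, d} : Finset (Fin n))).Nonempty) ∪
            {({b, c, d} : Finset (Fin n))}).filter fun F => E ⊆ F).card) ^ 2
          = 9 := by
        intro E hE
        simp only [hT, Finset.mem_filter, Finset.mem_powersetCard_univ] at hE
        rw [valHB a b c d hab hac had hbc hbd hcd hE.1.1 hE.1.2 hE.2]; norm_num
      rw [Finset.sum_congr rfl hconst, Finset.sum_const, smul_eq_mul]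
      congr 1
      rw [Finset.filter_filter, classS2 a b c d, card_image_pair_fixed a
        (by simp : a ∉ (({a, b, c, d} : Finset (Fin n))ᶜ)), card_compl', hcard4]
    have h3 : ∑ E ∈ (T.filter (fun E => ¬ a ∈ E)).filter
        (fun E => E ⊆ ({b, c, d} : Finset (Fin n))),
        (((((Finset.univ.powersetCard 3).filter fun F : Finset (Fin n) =>
            a ∈ F ∧ (F ∩ ({b, c, d} : Finset (Fin n))).Nonempty) ∪
          {({b, c, d} : Finset (Fin n))}).filter fun F => E ⊆ F).card) ^ 2
        = 3 * 4 := by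
      have hconst : ∀ E ∈ (T.filter (fun E => ¬ a ∈ E)).filter
          (fun E => E ⊆ ({b, c, d} : Finset (Fin n))),
          (((((Finset.univ.powersetCard 3).filter fun F : Finset (Fin n) =>
              a ∈ F ∧ (F ∩ ({b, c, d} : Finset (Fin n))).Nonempty) ∪
            {({b, c, d} : Finset (Fin n))}).filter fun F => E ⊆ F).card) ^ 2
          = 4 := by
        intro E hE
        simp only [hT, Finset.mem_filter, Finset.mem_powersetCard_univ] at hE
        rw [valHC a b c d hab hac had hE.1.1 hE.2]; norm_num
      rw [Finset.sum_congr rfl hconst, Finset.sum_const, smul_eq_mul]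
      congr 1
      rw [Finset.filter_filter, classS3 a b c d hab hac had,
        Finset.card_powersetCard, hcard3]
      rfl
    have h4 : ∑ E ∈ ((T.filter (fun E => ¬ a ∈ E)).filter
        (fun E => ¬ E ⊆ ({b, c, d} : Finset (Fin n)))).filter
        (fun E => (E ∩ ({b, c, d} : Finset (Fin n))).Nonempty),
        (((((Finset.univ.powersetCard 3).filter fun F : Finset (Fin n) =>
            a ∈ F ∧ (F ∩ ({b, c, d} : Finset (Fin n))).Nonempty) ∪
          {({b, c, d} : Finset (Fin n))}).filter fun F => E ⊆ F).card) ^ 2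
        = (3 * (n - 4)) * 1 := by
      have hconst : ∀ E ∈ ((T.filter (fun E => ¬ a ∈ E)).filter
          (fun E => ¬ E ⊆ ({b, c, d} : Finset (Fin n)))).filter
          (fun E => (E ∩ ({b, c, d} : Finset (Fin n))).Nonempty),
          (((((Finset.univ.powersetCard 3).filter fun F : Finset (Fin n) =>
              a ∈ F ∧ (F ∩ ({b, c, d} : Finset (Fin n))).Nonempty) ∪
            {({b, c, d} : Finset (Fin n))}).filter fun F => E ⊆ F).card) ^ 2
          = 1 := by
        intro E hE
        simp only [hT, Finset.mem_filter, Finset.mem_powersetCard_univ] at hE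
        rw [valHD a b c d hab hac had hE.1.1.1 hE.1.1.2 hE.1.2 hE.2]; norm_num
      rw [Finset.sum_congr rfl hconst, Finset.sum_const, smul_eq_mul]
      congr 1
      rw [Finset.filter_filter, Finset.filter_filter, classS4 a b c d hab hac had,
        card_image_pair_prod (fun x hx => by
          simp only [Finset.mem_compl, not_not]
          exact Finset.mem_insert_of_mem hx), hcard3, card_compl', hcard4]
    have h5 : ∑ E ∈ ((T.filter (fun E => ¬ a ∈ E)).filter
        (fun E => ¬ E ⊆ ({b, c, d} : Finset (Fin n)))).filter
        (fun E => ¬ (E ∩ ({b, c, d} : Finset (Fin n))).Nonempty),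
        (((((Finset.univ.powersetCard 3).filter fun F : Finset (Fin n) =>
            a ∈ F ∧ (F ∩ ({b, c, d} : Finset (Fin n))).Nonempty) ∪
          {({b, c, d} : Finset (Fin n))}).filter fun F => E ⊆ F).card) ^ 2
        = 0 := by
      apply Finset.sum_eq_zero
      intro E hE
      simp only [hT, Finset.mem_filter, Finset.mem_powersetCard_univ,
        Finset.not_nonempty_iff_eq_empty] at hE
      rw [valHE a b c d hab hac had hE.1.1.1 hE.1.1.2 hE.2]; norm_num
    rw [h1, h2, h3, h4, h5]
  -- RHS
  have hA : ∑ E ∈ T,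
        ((((Finset.univ.powersetCard 3).filter fun F : Finset (Fin n) =>
            2 ≤ (F ∩ ({a, b, c} : Finset (Fin n))).card).filter fun F => E ⊆ F).card) ^ 2
      = 3 * (n - 2) ^ 2 + ((3 * (n - 3)) * 4 + 0) := by
    rw [← Finset.sum_filter_add_sum_filter_not T
      (fun E => E ⊆ ({a, b, c} : Finset (Fin n)))]
    rw [← Finset.sum_filter_add_sum_filter_not (T.filter
      (fun E => ¬ E ⊆ ({a, b, c} : Finset (Fin n))))
      (fun E => (E ∩ ({a, b, c} : Finset (Fin n))).Nonempty)]
    have h1 : ∑ E ∈ T.filter (fun E => E ⊆ ({a, b, c} : Finset (Fin n))),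
        ((((Finset.univ.powersetCard 3).filter fun F : Finset (Fin n) =>
            2 ≤ (F ∩ ({a, b, c} : Finset (Fin n))).card).filter fun F => E ⊆ F).card) ^ 2
        = 3 * (n - 2) ^ 2 := by
      have hconst : ∀ E ∈ T.filter (fun E => E ⊆ ({a, b, c} : Finset (Fin n))),
          ((((Finset.univ.powersetCard 3).filter fun F : Finset (Fin n) =>
              2 ≤ (F ∩ ({a, b, c} : Finset (Fin n))).card).filter fun F => E ⊆ F).card) ^ 2
          = (n - 2) ^ 2 := by
        intro E hE
        simp only [hT, Finset.mem_filter, Finset.mem_powersetCard_univ] at hE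
        rw [valAA a b c hE.1 hE.2]
      rw [Finset.sum_congr rfl hconst, Finset.sum_const, smul_eq_mul]
      congr 1
      rw [classR1 a b c, Finset.card_powersetCard, hcardabc]
      rfl
    have h2 : ∑ E ∈ (T.filter (fun E => ¬ E ⊆ ({a, b, c} : Finset (Fin n)))).filter
        (fun E => (E ∩ ({a, b, c} : Finset (Fin n))).Nonempty),
        ((((Finset.univ.powersetCard 3).filter fun F : Finset (Fin n) =>
            2 ≤ (F ∩ ({a, b, c} : Finset (Fin n))).card).filter fun F => E ⊆ F).card) ^ 2
        = (3 * (n - 3)) * 4 := by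
      have hconst : ∀ E ∈ (T.filter (fun E => ¬ E ⊆ ({a, b, c} : Finset (Fin n)))).filter
          (fun E => (E ∩ ({a, b, c} : Finset (Fin n))).Nonempty),
          ((((Finset.univ.powersetCard 3).filter fun F : Finset (Fin n) =>
              2 ≤ (F ∩ ({a, b, c} : Finset (Fin n))).card).filter fun F => E ⊆ F).card) ^ 2
          = 4 := by
        intro E hE
        simp only [hT, Finset.mem_filter, Finset.mem_powersetCard_univ] at hE
        rw [valAB a b c hab hac hbc hE.1.1 hE.1.2 hE.2]; norm_num
      rw [Finset.sum_congr rfl hconst, Finset.sum_const, smul_eq_mul]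
      congr 1
      rw [Finset.filter_filter, classR2 a b c,
        card_image_pair_prod (fun x hx => Finset.notMem_compl.mpr hx), hcardabc, card_compl', hcardabc]
    have h3 : ∑ E ∈ (T.filter (fun E => ¬ E ⊆ ({a, b, c} : Finset (Fin n)))).filter
        (fun E => ¬ (E ∩ ({a, b, c} : Finset (Fin n))).Nonempty),
        ((((Finset.univ.powersetCard 3).filter fun F : Finset (Fin n) =>
            2 ≤ (F ∩ ({a, b, c} : Finset (Fin n))).card).filter fun F => E ⊆ F).card) ^ 2
        = 0 := by
      apply Finset.sum_eq_zero
      intro E hE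
      simp only [hT, Finset.mem_filter, Finset.mem_powersetCard_univ,
        Finset.not_nonempty_iff_eq_empty] at hE
      rw [valAC a b c hE.1.1 hE.2]; norm_num
    rw [h1, h2, h3]
  rw [hL, hA]
  obtain ⟨m, rfl⟩ : ∃ m, n = m + 4 := ⟨n - 4, (Nat.sub_add_cancel hn).symm⟩
  have e2 : m + 4 - 2 = m + 2 := by omega
  have e3 : m + 4 - 3 = m + 1 := by omega
  have e4 : m + 4 - 4 = m := by omega
  rw [e2, e3, e4]
  ring
end

section
/- Let k ≥ 2, s ≥ 1. For the family B(n,k,s) = {F ∈ C([n],k) : F ∩ [s] ≠ ∅}, as n → ∞ with k, s fixed, co₂(B(n,k,s)) = s·k·(k-1)·C(n,k)·(1 + o(1)). -/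
/-!
A `(k-1)`-set meeting `[s]` lies in `n-k+1` members of `B(n,k,s)` and one disjoint from `[s]`
lies in exactly `s` of them (add one point of `[s]`); this gives the closed form of
`co₂(B(n,k,s))`. With `r = C(n-s,k-1)/C(n,k-1) = ∏_{i<k-1} (1 - s/(n-i))` the normalized
quantity is `(n-k+1)(1-r)/(s(k-1)) + s r/((k-1)(n-k+1))`, and `(n-k+1)(1-r) → (k-1)s` because
`1 - ∏ (1 - xᵢ) = ∑ xᵢ` to first order.
-/

open Filter Finset Topology

theorem tendsto_mul_one_sub_prod {ι β R : Type*} [CommRing R] [TopologicalSpace R]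
    [IsTopologicalRing R] {l : Filter β} {t : Finset ι} {g : β → R} {f : ι → β → R} {a : ι → R}
    (hf : ∀ i ∈ t, Tendsto (f i) l (𝓝 1))
    (hgf : ∀ i ∈ t, Tendsto (fun x => g x * (1 - f i x)) l (𝓝 (a i))) :
    Tendsto (fun x => g x * (1 - ∏ i ∈ t, f i x)) l (𝓝 (∑ i ∈ t, a i)) := by
  classical
  induction t using Finset.induction_on with
  | empty => simpa using tendsto_const_nhds
  | insert j t hj ih =>
    rw [forall_mem_insert] at hf hgf
    have key := hgf.1.add (hf.1.mul (ih hf.2 hgf.2))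
    rw [one_mul] at key
    simp only [prod_insert hj, sum_insert hj]
    refine key.congr fun x => ?_
    ring

theorem tendsto_natCast_add_div_natCast_add (c d : ℝ) :
    Tendsto (fun n : ℕ => ((n : ℝ) + c) / (n + d)) atTop (𝓝 1) := by
  have hc : Tendsto (fun n : ℕ => c / ((n : ℝ) + d)) atTop (𝓝 0) :=
    tendsto_const_nhds.div_atTop (tendsto_atTop_add_const_right _ d tendsto_natCast_atTop_atTop)
  simpa [add_div] using (tendsto_natCast_div_add_atTop d).add hc

noncomputable def chooseRatio (n s m : ℕ) : ℝ := ((n - s).choose m : ℝ) / n.choose m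

theorem chooseRatio_eq_prod {s m n : ℕ} (h : m + s ≤ n) :
    chooseRatio n s m = ∏ i ∈ range m, (1 - s / ((n : ℝ) - i)) := by
  rw [chooseRatio]
  induction m with
  | zero => simp
  | succ m ih =>
    have hsucc (a : ℕ) (ha : m ≤ a) : (a.choose (m + 1) : ℝ) = a.choose m * (a - m) / (m + 1) := by
      rw [eq_div_iff (by positivity), ← Nat.cast_sub ha]
      exact_mod_cast Nat.choose_succ_right_eq a m
    have hnm : (n : ℝ) - m ≠ 0 := by
      rw [sub_ne_zero]; exact_mod_cast (by omega : n ≠ m)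
    have hpos : (n.choose m : ℝ) ≠ 0 := by exact_mod_cast (Nat.choose_pos (by omega)).ne'
    rw [prod_range_succ, ← ih (by omega), hsucc _ (by omega), hsucc _ (by omega),
      Nat.cast_sub (by omega : s ≤ n)]
    field_simp
    ring

theorem tendsto_one_sub_div_natCast_sub (s i : ℝ) :
    Tendsto (fun n : ℕ => 1 - s / ((n : ℝ) - i)) atTop (𝓝 1) := by
  have hgrow := tendsto_atTop_add_const_right _ (-i) tendsto_natCast_atTop_atTop
  simpa [← sub_eq_add_neg] using tendsto_const_nhds.sub (tendsto_const_nhds.div_atTop hgrow)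

theorem tendsto_chooseRatio (s m : ℕ) : Tendsto (chooseRatio · s m) atTop (𝓝 1) := by
  have hprod := tendsto_finsetProd (range m) fun i _ => tendsto_one_sub_div_natCast_sub s i
  rw [prod_const_one] at hprod
  refine hprod.congr' ?_
  filter_upwards [eventually_ge_atTop (m + s)] with n hn
  exact (chooseRatio_eq_prod hn).symm

theorem tendsto_mul_one_sub_chooseRatio (s m : ℕ) (c : ℝ) :
    Tendsto (fun n : ℕ => ((n : ℝ) + c) * (1 - chooseRatio n s m)) atTop (𝓝 (m * s)) := by
  have hfactor (i : ℕ) :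
      Tendsto (fun n : ℕ => ((n : ℝ) + c) * (1 - (1 - s / ((n : ℝ) - i)))) atTop (𝓝 s) := by
    simpa [sub_eq_add_neg, mul_div_left_comm] using
      (tendsto_natCast_add_div_natCast_add c (-i)).const_mul (s : ℝ)
  have hprod := tendsto_mul_one_sub_prod (t := range m)
    (fun i _ => tendsto_one_sub_div_natCast_sub s i) fun i _ => hfactor i
  rw [sum_const, card_range, nsmul_eq_mul] at hprod
  refine hprod.congr' ?_
  filter_upwards [eventually_ge_atTop (m + s)] with n hn
  rw [chooseRatio_eq_prod hn]

section

variable {α : Type*} [Fintype α] [DecidableEq α]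

def codegree (𝓕 : Finset (Finset α)) (E : Finset α) : ℕ := #{A ∈ 𝓕 | E ⊆ A}

def co2 (𝓕 : Finset (Finset α)) (k : ℕ) : ℕ :=
  ∑ E ∈ powersetCard (k - 1) univ, codegree 𝓕 E ^ 2

def familyB (S : Finset α) (k : ℕ) : Finset (Finset α) :=
  {A ∈ powersetCard k univ | (A ∩ S).Nonempty}

theorem filter_superset_powersetCard_card_add_one (E : Finset α) :
    {A ∈ powersetCard (#E + 1) (univ : Finset α) | E ⊆ A} = Eᶜ.image (fun x : α => insert x E) := by
  ext A
  simp only [mem_filter, mem_powersetCard, subset_univ, true_and, mem_image, mem_compl,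
    exists_eq_insert_iff]
  tauto

theorem codegree_filter_powersetCard_card_add_one (P : Finset α → Prop) [DecidablePred P]
    (E : Finset α) :
    codegree {A ∈ powersetCard (#E + 1) univ | P A} E = #{x ∈ Eᶜ | P (insert x E)} := by
  rw [codegree, filter_comm, filter_superset_powersetCard_card_add_one, filter_image,
    card_image_of_injOn]
  intro x hx y hy hxy
  exact (insert_inj (mem_compl.1 (mem_filter.1 hx).1)).1 hxy

theorem codegree_familyB (S : Finset α) {E : Finset α} {m : ℕ} (hE : #E = m) :
    codegree (familyB S (m + 1)) E = if (E ∩ S).Nonempty then Fintype.card α - m else #S := by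
  subst hE
  rw [familyB, codegree_filter_powersetCard_card_add_one]
  split_ifs with hES
  · obtain ⟨y, hy⟩ := hES
    rw [filter_true_of_mem fun x _ => ⟨y, inter_subset_inter_right (subset_insert x E) hy⟩,
      card_compl]
  · rw [not_nonempty_iff_eq_empty] at hES
    congr 1
    ext x
    by_cases hx : x ∈ S
    · have hxE : x ∉ E := fun hxE => notMem_empty x (hES ▸ mem_inter.2 ⟨hxE, hx⟩)
      simp [insert_inter_of_mem hx, hES, hx, hxE]
    · simp [insert_inter_of_notMem hx, hES, hx]

theorem co2_familyB (S : Finset α) (m : ℕ) :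
    co2 (familyB S (m + 1)) (m + 1) =
      ((Fintype.card α).choose m - (Fintype.card α - #S).choose m) * (Fintype.card α - m) ^ 2 +
        (Fintype.card α - #S).choose m * #S ^ 2 := by
  have hdisj : {E ∈ powersetCard m (univ : Finset α) | ¬(E ∩ S).Nonempty} = powersetCard m Sᶜ := by
    ext E
    simp [subset_compl_iff_disjoint_right, disjoint_iff_inter_eq_empty, not_nonempty_iff_eq_empty,
      and_comm]
  have hcard := card_filter_add_card_filter_not (s := powersetCard m univ) fun E => (E ∩ S).Nonempty
  rw [hdisj, card_powersetCard, card_powersetCard, card_compl, card_univ] at hcard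
  rw [co2, Nat.add_sub_cancel, sum_congr rfl fun E hE => by
    rw [codegree_familyB S (mem_powersetCard.1 hE).2, apply_ite (· ^ 2)]]
  rw [sum_ite, sum_const, sum_const, hdisj, card_powersetCard, card_compl, smul_eq_mul,
    smul_eq_mul]
  congr 2
  omega

theorem cast_co2_familyB_div (S : Finset α) {m : ℕ} (hm : m ≠ 0) (hS : S.Nonempty)
    (hmα : m < Fintype.card α) :
    (co2 (familyB S (m + 1)) (m + 1) : ℝ) / (#S * (m + 1) * m * (Fintype.card α).choose (m + 1)) =
      ((Fintype.card α : ℝ) - m) * (1 - chooseRatio (Fintype.card α) #S m) / (#S * m) +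
        #S * chooseRatio (Fintype.card α) #S m / (m * ((Fintype.card α : ℝ) - m)) := by
  rw [co2_familyB, chooseRatio]
  set N := Fintype.card α
  have hpascal : ((N.choose (m + 1) : ℕ) : ℝ) * (m + 1) = N.choose m * ((N : ℝ) - m) := by
    rw [← Nat.cast_sub hmα.le]; exact_mod_cast Nat.choose_succ_right_eq N m
  have hchoose : (N.choose m : ℝ) ≠ 0 := by exact_mod_cast (Nat.choose_pos hmα.le).ne'
  have hNm : (N : ℝ) - m ≠ 0 := by rw [sub_ne_zero]; exact_mod_cast hmα.ne'
  have hs : (#S : ℝ) ≠ 0 := by exact_mod_cast hS.card_pos.ne'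
  have hm' : (m : ℝ) ≠ 0 := by exact_mod_cast hm
  have hden :
      (#S : ℝ) * (m + 1) * m * N.choose (m + 1) = #S * m * (N.choose m * ((N : ℝ) - m)) := by
    rw [← hpascal]; ring
  rw [hden]
  push_cast [Nat.choose_le_choose m (Nat.sub_le N #S), hmα.le]
  field_simp

end

/-- Asymptotics of the codegree squared sum of `B(n,k,s)`: for fixed `k ≥ 2`, `s ≥ 1`,
`co₂(B(n,k,s)) = s·k·(k-1)·C(n,k)·(1 + o(1))` as `n → ∞`, i.e. the ratio tends to `1`. -/
theorem co2_B_asymptotics (k s : ℕ) (hk : 2 ≤ k) (hs : 1 ≤ s) :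
    Tendsto (fun n : ℕ =>
      ((∑ E ∈ Finset.univ.powersetCard (k - 1),
          ((((Finset.univ.powersetCard k).filter fun A : Finset (Fin n) =>
              (A ∩ (Finset.univ.filter fun v : Fin n => (v : ℕ) < s)).Nonempty).filter
                fun A => E ⊆ A).card) ^ 2 : ℕ) : ℝ) /
        ((s : ℝ) * k * (k - 1) * (n.choose k : ℝ)))
      atTop (nhds 1) := by
  obtain ⟨m, rfl⟩ : ∃ m, k = m + 1 := ⟨k - 1, by omega⟩
  have hm : (m : ℝ) ≠ 0 := by norm_cast; omega
  have hs' : (s : ℝ) ≠ 0 := by norm_cast; omega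
  have hmain :
      Tendsto (fun n : ℕ => ((n : ℝ) - m) * (1 - chooseRatio n s m) / (s * m)) atTop (𝓝 1) := by
    have := (tendsto_mul_one_sub_chooseRatio s m (-m)).div_const (s * m)
    simpa [← sub_eq_add_neg, mul_comm (m : ℝ), hm, hs'] using this
  have herr :
      Tendsto (fun n : ℕ => s * chooseRatio n s m / (m * ((n : ℝ) - m))) atTop (𝓝 0) := by
    have hgrow : Tendsto (fun n : ℕ => (m : ℝ) * ((n : ℝ) - m)) atTop atTop := by
      simpa [← sub_eq_add_neg] using (tendsto_atTop_add_const_right _ (-(m : ℝ))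
        tendsto_natCast_atTop_atTop).const_mul_atTop (by positivity : (0 : ℝ) < m)
    exact ((tendsto_chooseRatio s m).const_mul (s : ℝ)).div_atTop hgrow
  have hsum := hmain.add herr
  rw [add_zero] at hsum
  refine hsum.congr' ?_
  filter_upwards [eventually_ge_atTop (m + 1 + s)] with n hn
  set S : Finset (Fin n) := univ.filter fun v : Fin n => (v : ℕ) < s
  have hS : #S = s := by rw [Fin.card_filter_val_lt]; omega
  have hratio := cast_co2_familyB_div S (m := m) (by omega) (by rw [← card_pos, hS]; omega)
    (by rw [Fintype.card_fin]; omega)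
  rw [hS, Fintype.card_fin] at hratio
  change _ = (co2 (familyB _ (m + 1)) (m + 1) : ℝ) / _
  push_cast
  rw [add_sub_cancel_right, hratio]
end
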